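/- Under the assumptions of the previous setting (μ a quaternionic Borel measure on ℝ with ∫ e^{(ω+ε)|t|} d|μ|(t) < ∞ and f(s) = ∫_ℝ dμ(t) e^{-st} for -(ω+ε) < Re(s) < ω+ε), for every n ∈ ℕ the n-th slice derivative of f satisfies ∂_s^n f(s) = ∫_ℝ dμ(t)·(-t)^n e^{-st} on the strip. -/

import Mathlib

open scoped Quaternion ENNReal
open MeasureTheory

noncomputable section

/-- An imaginary unit quaternion. -/
def QUnit (I : ℍ[ℝ]) : Prop := I.re = 0 ∧ ‖I‖ = 1

/-- The total variation of a quaternionic (vector) measure. -/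
def qvar {α : Type*} [MeasurableSpace α] (μ : VectorMeasure α ℍ[ℝ]) (A : Set α) : ℝ≥0∞ :=
  ⨆ (π : ℕ → Set α) (_ : ∀ i, MeasurableSet (π i))
    (_ : Pairwise (Function.onFun Disjoint π)) (_ : (⋃ i, π i) = A),
    ∑' i, (‖μ (π i)‖₊ : ℝ≥0∞)

open scoped Nat

lemma aux_pow_le (k : ℕ) {y : ℝ} (hy : 0 ≤ y) : y ^ k ≤ (k ! : ℝ) * Real.exp y := by
  have hk : (0:ℝ) < (k ! : ℝ) := by exact_mod_cast k.factorial_pos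
  have h1 : y ^ k / (k ! : ℝ) ≤ Real.exp y :=
    calc y ^ k / (k ! : ℝ) ≤ ∑ i ∈ Finset.range (k+1), y ^ i / (i ! : ℝ) :=
          Finset.single_le_sum (f := fun i => y ^ i / (i ! : ℝ))
            (fun i _ => by positivity) (Finset.self_mem_range_succ k)
      _ ≤ Real.exp y := Real.sum_le_exp_of_nonneg hy _
  calc y ^ k = (k ! : ℝ) * (y ^ k / (k ! : ℝ)) := by field_simp
    _ ≤ (k ! : ℝ) * Real.exp y := by gcongr

lemma aux_split (I : ℍ[ℝ]) (x₁ t y : ℝ) :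
    -(t • ((y:ℍ[ℝ]) + x₁ • I)) = ((-(t*y) : ℝ) : ℍ[ℝ]) + (-(t*x₁)) • I := by
  rw [smul_add, ← Quaternion.coe_smul, smul_smul, neg_add, neg_smul, smul_eq_mul,
    ← Quaternion.coe_neg]

lemma aux_decomp (I : ℍ[ℝ]) (x₁ t y : ℝ) :
    NormedSpace.exp (-(t • ((y:ℍ[ℝ]) + x₁ • I))) =
      Real.exp (-(t*y)) • NormedSpace.exp ((-(t*x₁)) • I) := by
  let +nondep : NormedAlgebra ℚ ℍ[ℝ] := .restrictScalars ℚ ℝ ℍ[ℝ]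
  rw [aux_split, NormedSpace.exp_add_of_commute (Quaternion.coe_commute _ _)]
  have : NormedSpace.exp (((-(t*y) : ℝ)) : ℍ[ℝ]) = ((Real.exp (-(t*y)) : ℝ) : ℍ[ℝ]) := by
    rw [Real.exp_eq_exp_ℝ, ← Quaternion.algebraMap_def, NormedSpace.algebraMap_exp_comm]
  rw [this, Quaternion.coe_mul_eq_smul]

lemma aux_hasDerivAt (I : ℍ[ℝ]) (x₁ t y : ℝ) :
    HasDerivAt (fun y : ℝ => NormedSpace.exp (-(t • ((y:ℍ[ℝ]) + x₁ • I))))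
      ((-t) • NormedSpace.exp (-(t • ((y:ℍ[ℝ]) + x₁ • I)))) y := by
  have h0 : HasDerivAt (fun y : ℝ => -(t*y)) (-t) y := by
    simpa [neg_mul] using (hasDerivAt_id y).const_mul (-t)
  have h1 : HasDerivAt (fun y : ℝ => Real.exp (-(t*y))) (Real.exp (-(t*y)) * (-t)) y :=
    (Real.hasDerivAt_exp _).comp y h0
  have h2 := h1.smul_const (NormedSpace.exp ((-(t*x₁)) • I))
  simp_rw [aux_decomp I x₁ t]
  convert h2 using 1
  · rfl
  · rfl
  rw [smul_smul, mul_comm]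

lemma aux_norm (I : ℍ[ℝ]) (hI : I.re = 0) (x₁ t y : ℝ) :
    ‖NormedSpace.exp (-(t • ((y:ℍ[ℝ]) + x₁ • I)))‖ = Real.exp (-(t*y)) := by
  rw [Quaternion.norm_exp]
  have : (-(t • ((y:ℍ[ℝ]) + x₁ • I))).re = -(t*y) := by
    simp [Quaternion.re_neg, Quaternion.re_smul, Quaternion.re_add, Quaternion.re_coe, hI,
      smul_eq_mul]
  rw [this, ← Real.exp_eq_exp_ℝ, Real.norm_eq_abs, Real.abs_exp]

/-- The `n`-th slice derivative (which, on each slice, is the `n`-th partial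
derivative with respect to the real part) of the quaternionic bilateral
Laplace–Stieltjes transform satisfies `∂ₛⁿ f(s) = ∫ dμ(t) (-t)ⁿ e^{-st}` on the strip. -/
theorem stmt14 (ω ε : ℝ) (hω : 0 ≤ ω) (hε : 0 < ε)
    (μ : VectorMeasure ℝ ℍ[ℝ])
    (m : Measure ℝ) [IsFiniteMeasure m] (h : ℝ → ℍ[ℝ])
    (hm : ∀ A : Set ℝ, MeasurableSet A → m A = qvar μ A)
    (hh : StronglyMeasurable h) (hh1 : ∀ t, ‖h t‖ = 1)
    (hrep : ∀ A : Set ℝ, MeasurableSet A → μ A = ∫ t in A, h t ∂m)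
    (hgrowth : ∫⁻ t, ENNReal.ofReal (Real.exp ((ω + ε) * |t|)) ∂m < ⊤)
    (f : ℍ[ℝ] → ℍ[ℝ])
    (hf : ∀ s, f s = ∫ t, h t * NormedSpace.exp (-(t • s)) ∂m) :
    ∀ (n : ℕ) (I : ℍ[ℝ]), QUnit I → ∀ x₀ x₁ : ℝ, -(ω + ε) < x₀ → x₀ < ω + ε →
      iteratedDeriv n (fun u : ℝ => f ((u : ℍ[ℝ]) + x₁ • I)) x₀ =
        ∫ t, h t * (((-t) ^ n : ℝ) •
          NormedSpace.exp (-(t • ((x₀ : ℍ[ℝ]) + x₁ • I)))) ∂m := by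
  intro n I hI x₀ x₁ hx₀1 hx₀2
  have hIre := hI.1
  have normF : ∀ (k : ℕ) (x t : ℝ),
      ‖h t * (((-t) ^ k : ℝ) • NormedSpace.exp (-(t • ((x:ℍ[ℝ]) + x₁ • I))))‖
        = |t| ^ k * Real.exp (-(t * x)) := by
    intro k x t
    rw [norm_mul, hh1, one_mul, norm_smul, aux_norm I hIre, Real.norm_eq_abs, abs_pow, abs_neg]
  have contF : ∀ (k : ℕ) (x : ℝ),
      Continuous (fun t : ℝ => ((-t) ^ k : ℝ) • NormedSpace.exp (-(t • ((x:ℍ[ℝ]) + x₁ • I)))) := by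
    intro k x
    let +nondep : NormedAlgebra ℚ ℍ[ℝ] := .restrictScalars ℚ ℝ ℍ[ℝ]
    exact (continuous_id.neg.pow k).smul
      (NormedSpace.exp_continuous.comp ((continuous_id.smul continuous_const).neg))
  have measF : ∀ (k : ℕ) (x : ℝ),
      AEStronglyMeasurable
        (fun t => h t * (((-t) ^ k : ℝ) • NormedSpace.exp (-(t • ((x:ℍ[ℝ]) + x₁ • I))))) m :=
    fun k x => hh.aestronglyMeasurable.mul ((contF k x).aestronglyMeasurable)
  have int_exp : Integrable (fun t => Real.exp ((ω + ε) * |t|)) m := by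
    refine ⟨(Real.continuous_exp.comp (continuous_const.mul continuous_abs)).aestronglyMeasurable, ?_⟩
    rw [hasFiniteIntegral_iff_ofReal (Filter.Eventually.of_forall fun t => (Real.exp_pos _).le)]
    exact hgrowth
  have key_bound : ∀ (k : ℕ) (δ B : ℝ), 0 < δ → B + δ = ω + ε → ∀ x t : ℝ, |x| ≤ B →
      |t| ^ k * Real.exp (-(t * x)) ≤ ((k ! : ℝ) / δ ^ k) * Real.exp ((ω + ε) * |t|) := by
    intro k δ B hδ hBδ x t hx
    have hB : 0 ≤ B := le_trans (abs_nonneg x) hx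
    have h1 : |t| ^ k ≤ ((k ! : ℝ) / δ ^ k) * Real.exp (δ * |t|) := by
      have h2 := aux_pow_le k (y := δ * |t|) (by positivity)
      rw [mul_pow] at h2
      calc |t| ^ k = (δ ^ k * |t| ^ k) / δ ^ k := by field_simp
        _ ≤ ((k ! : ℝ) * Real.exp (δ * |t|)) / δ ^ k := by gcongr
        _ = ((k ! : ℝ) / δ ^ k) * Real.exp (δ * |t|) := by ring
    have h2 : Real.exp (-(t * x)) ≤ Real.exp (B * |t|) := by
      apply Real.exp_le_exp.mpr
      calc -(t * x) ≤ |t * x| := neg_le_abs _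
        _ = |t| * |x| := abs_mul _ _
        _ ≤ |t| * B := by gcongr
        _ = B * |t| := mul_comm _ _
    calc |t| ^ k * Real.exp (-(t * x))
        ≤ (((k ! : ℝ) / δ ^ k) * Real.exp (δ * |t|)) * Real.exp (B * |t|) :=
          mul_le_mul h1 h2 (Real.exp_pos _).le (by positivity)
      _ = ((k ! : ℝ) / δ ^ k) * Real.exp ((ω + ε) * |t|) := by
          rw [mul_assoc, ← Real.exp_add]
          congr 2
          rw [← hBδ]; ring
  have intF : ∀ (k : ℕ) (x : ℝ), |x| < ω + ε →
      Integrable (fun t => h t * (((-t) ^ k : ℝ) •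
        NormedSpace.exp (-(t • ((x:ℍ[ℝ]) + x₁ • I))))) m := by
    intro k x hx
    have hδ : 0 < (ω + ε - |x|) / 2 := by linarith
    refine (int_exp.const_mul ((k ! : ℝ) / ((ω + ε - |x|) / 2) ^ k)).mono' (measF k x)
      (Filter.Eventually.of_forall fun t => ?_)
    rw [normF]
    exact key_bound k _ (|x| + (ω + ε - |x|) / 2) hδ (by ring) x t (le_add_of_nonneg_right hδ.le)
  have derivF : ∀ (k : ℕ) (x : ℝ), |x| < ω + ε →
      HasDerivAt
        (fun y : ℝ => ∫ t, h t * (((-t) ^ k : ℝ) •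
          NormedSpace.exp (-(t • ((y:ℍ[ℝ]) + x₁ • I)))) ∂m)
        (∫ t, h t * (((-t) ^ (k+1) : ℝ) •
          NormedSpace.exp (-(t • ((x:ℍ[ℝ]) + x₁ • I)))) ∂m) x := by
    intro k x hx
    have hδ : 0 < (ω + ε - |x|) / 2 := by linarith
    set δ := (ω + ε - |x|) / 2 with hδdef
    have hb := hasDerivAt_integral_of_dominated_loc_of_deriv_le (𝕜 := ℝ) (μ := m) (x₀ := x)
      (F := fun y t => h t * (((-t) ^ k : ℝ) •
        NormedSpace.exp (-(t • ((y:ℍ[ℝ]) + x₁ • I)))))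
      (F' := fun y t => h t * (((-t) ^ (k+1) : ℝ) •
        NormedSpace.exp (-(t • ((y:ℍ[ℝ]) + x₁ • I)))))
      (bound := fun t => (((k+1)! : ℝ) / δ ^ (k+1)) * Real.exp ((ω + ε) * |t|)) (Metric.ball_mem_nhds x hδ)
      (Filter.Eventually.of_forall fun y => measF k y)
      (intF k x hx)
      (measF (k+1) x)
      (Filter.Eventually.of_forall fun t y hy => by
        rw [normF]
        have hyB : |y| ≤ |x| + δ := by
          have h3 : |y| - |x| ≤ |y - x| := abs_sub_abs_le_abs_sub y x
          have h4 : |y - x| < δ := by simpa [Real.dist_eq] using hy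
          linarith
        exact key_bound (k+1) δ (|x| + δ) hδ (by rw [hδdef]; ring) y t hyB)
      (int_exp.const_mul _)
      (Filter.Eventually.of_forall fun t y hy => by
        have h5 := ((aux_hasDerivAt I x₁ t y).const_smul ((-t) ^ k : ℝ)).const_mul (h t)
        convert h5 using 2
        · rfl
        · rfl
        rw [pow_succ, ← smul_smul])
    exact hb.2
  have main : ∀ (k : ℕ) (x : ℝ), |x| < ω + ε →
      iteratedDeriv k (fun u : ℝ => f ((u : ℍ[ℝ]) + x₁ • I)) x =
        ∫ t, h t * (((-t) ^ k : ℝ) •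
          NormedSpace.exp (-(t • ((x:ℍ[ℝ]) + x₁ • I)))) ∂m := by
    intro k
    induction k with
    | zero => intro x hx; simp [iteratedDeriv_zero, hf]
    | succ k ih =>
      intro x hx
      rw [iteratedDeriv_succ]
      have hopen : IsOpen {y : ℝ | |y| < ω + ε} := isOpen_lt continuous_abs continuous_const
      have hev : iteratedDeriv k (fun u : ℝ => f ((u : ℍ[ℝ]) + x₁ • I)) =ᶠ[nhds x]
          (fun y : ℝ => ∫ t, h t * (((-t) ^ k : ℝ) •
            NormedSpace.exp (-(t • ((y:ℍ[ℝ]) + x₁ • I)))) ∂m) := by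
        filter_upwards [hopen.mem_nhds hx] with y hy using ih y hy
      rw [hev.deriv_eq]
      exact (derivF k x hx).deriv
  exact main n x₀ (abs_lt.mpr ⟨hx₀1, hx₀2⟩)
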